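/- Let M and M̂ be simple graphs on the vertex set {1,…,n}, and let v : ℝⁿ → ℝⁿ be a C¹ diffeomorphism. Suppose that for every ordered pair of distinct indices (k, l) with k and l not adjacent in M̂, every pair of indices i, j adjacent in M, and every x ∈ ℝⁿ, we have (∂v_i/∂x_k)(x) · (∂v_j/∂x_l)(x) = 0. Then there exists a permutation π of {1,…,n} such that whenever i and j are adjacent in M, π(i) and π(j) are adjacent in M̂. -/

import Mathlib

/-!
Since `w ∘ v = id`, the Jacobian of `v` at any point is invertible, so some term of its Leibniz
expansion is nonzero: there is a permutation `σ` with `∂v_{σ k}/∂x_k ≠ 0` for every `k`. If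
`i ~ j` in `M` while `σ⁻¹ i` and `σ⁻¹ j` were distinct non-neighbours in `M̂`, the hypothesis
would make the product of the two nonzero entries `∂v_i/∂x_{σ⁻¹ i}` and `∂v_j/∂x_{σ⁻¹ j}`
vanish; hence `π = σ⁻¹` works.
-/

/-- The (i,j) entry of the Jacobian of `f` at `x`: the j-th partial derivative
of the i-th component of `f`. -/
noncomputable def pd {n : ℕ} (f : (Fin n → ℝ) → (Fin n → ℝ)) (i j : Fin n)
    (x : Fin n → ℝ) : ℝ :=
  fderiv ℝ f x (Pi.single j 1) i

open Function

theorem fderiv_comp_fderiv_of_leftInverse {𝕜 E F : Type*} [NontriviallyNormedField 𝕜]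
    [NormedAddCommGroup E] [NormedSpace 𝕜 E] [NormedAddCommGroup F] [NormedSpace 𝕜 F]
    {v : E → F} {w : F → E} {x : E} (hw : DifferentiableAt 𝕜 w (v x))
    (hv : DifferentiableAt 𝕜 v x) (hwv : LeftInverse w v) :
    (fderiv 𝕜 w (v x)).comp (fderiv 𝕜 v x) = ContinuousLinearMap.id 𝕜 E := by
  rw [← fderiv_comp x hw hv, hwv.comp_eq_id, fderiv_id]

theorem det_toMatrix'_fderiv_ne_zero_of_leftInverse {ι 𝕜 : Type*} [Fintype ι] [DecidableEq ι]
    [NontriviallyNormedField 𝕜] {v w : (ι → 𝕜) → (ι → 𝕜)} {x : ι → 𝕜}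
    (hw : DifferentiableAt 𝕜 w (v x)) (hv : DifferentiableAt 𝕜 v x) (hwv : LeftInverse w v) :
    (LinearMap.toMatrix' (fderiv 𝕜 v x : (ι → 𝕜) →ₗ[𝕜] ι → 𝕜)).det ≠ 0 := by
  refine (Matrix.isUnit_det_of_left_inverse
    (B := LinearMap.toMatrix' (fderiv 𝕜 w (v x) : (ι → 𝕜) →ₗ[𝕜] ι → 𝕜)) ?_).ne_zero
  rw [← LinearMap.toMatrix'_comp, ← ContinuousLinearMap.toLinearMap_comp,
    fderiv_comp_fderiv_of_leftInverse hw hv hwv, ContinuousLinearMap.coe_id,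
    LinearMap.toMatrix'_id]

theorem pd_eq_toMatrix'_fderiv {n : ℕ} (f : (Fin n → ℝ) → (Fin n → ℝ)) (i j : Fin n)
    (x : Fin n → ℝ) :
    pd f i j x = LinearMap.toMatrix' (fderiv ℝ f x : (Fin n → ℝ) →ₗ[ℝ] Fin n → ℝ) i j := by
  rw [LinearMap.toMatrix'_apply]
  rfl

theorem Matrix.exists_perm_forall_ne_zero_of_det_ne_zero {ι R : Type*} [Fintype ι]
    [DecidableEq ι] [CommRing R] {A : Matrix ι ι R} (hA : A.det ≠ 0) :
    ∃ σ : Equiv.Perm ι, ∀ i, A (σ i) i ≠ 0 := by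
  by_contra! h
  refine hA ?_
  rw [Matrix.det_apply]
  refine Finset.sum_eq_zero fun σ _ => ?_
  obtain ⟨i, hi⟩ := h σ
  rw [Finset.prod_eq_zero (f := fun j => A (σ j) j) (Finset.mem_univ i) hi, smul_zero]

theorem SimpleGraph.Adj.perm_symm_of_mul_eq_zero {ι R : Type*} [MulZeroClass R]
    [NoZeroDivisors R] {G H : SimpleGraph ι} {A : Matrix ι ι R} {σ : Equiv.Perm ι}
    (hσ : ∀ k, A (σ k) k ≠ 0)
    (hA : ∀ k l, k ≠ l → ¬ H.Adj k l → ∀ i j, G.Adj i j → A i k * A j l = 0)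
    {i j : ι} (hij : G.Adj i j) : H.Adj (σ.symm i) (σ.symm j) := by
  by_contra hadj
  refine mul_ne_zero ?_ ?_ (hA _ _ (σ.symm.injective.ne hij.ne) hadj i j hij)
  · simpa using hσ (σ.symm i)
  · simpa using hσ (σ.symm j)

theorem exists_perm_adj_preserving_general
    {n : ℕ} (M Mhat : SimpleGraph (Fin n))
    (v w : (Fin n → ℝ) → (Fin n → ℝ))
    (hv : ContDiff ℝ 1 v) (hw : ContDiff ℝ 1 w)
    (hleft : Function.LeftInverse w v)
    (h2 : ∀ k l : Fin n, k ≠ l → ¬ Mhat.Adj k l →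
      ∀ i j : Fin n, M.Adj i j →
      ∀ x : Fin n → ℝ, pd v i k x * pd v j l x = 0) :
    ∃ π : Equiv.Perm (Fin n), ∀ i j : Fin n, M.Adj i j → Mhat.Adj (π i) (π j) := by
  have hdet := det_toMatrix'_fderiv_ne_zero_of_leftInverse (x := 0)
    (hw.differentiable one_ne_zero _) (hv.differentiable one_ne_zero _) hleft
  obtain ⟨σ, hσ⟩ := Matrix.exists_perm_forall_ne_zero_of_det_ne_zero hdet
  refine ⟨σ.symm, fun i j hij => hij.perm_symm_of_mul_eq_zero hσ ?_⟩
  intro k l hkl hadj i j hij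
  simpa only [pd_eq_toMatrix'_fderiv] using h2 k l hkl hadj i j hij 0

theorem exists_perm_adj_preserving
    {n : ℕ} (M Mhat : SimpleGraph (Fin n))
    (v w : (Fin n → ℝ) → (Fin n → ℝ))
    (hv : ContDiff ℝ 1 v) (hw : ContDiff ℝ 1 w)
    (hleft : Function.LeftInverse w v) (hright : Function.RightInverse w v)
    (h2 : ∀ k l : Fin n, k ≠ l → ¬ Mhat.Adj k l →
      ∀ i j : Fin n, M.Adj i j →
      ∀ x : Fin n → ℝ, pd v i k x * pd v j l x = 0) :
    ∃ π : Equiv.Perm (Fin n), ∀ i j : Fin n, M.Adj i j → Mhat.Adj (π i) (π j) :=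
  exists_perm_adj_preserving_general M Mhat v w hv hw hleft h2
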